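/- Let N ≥ 1 and m ≥ 1. One has the continuous inclusions W^m_N(ℝ) ⊆ H^m_N(ℝ) ⊆ H^m(ℝ), and for 1 ≤ l ≤ N, H^l_N(ℝ) ⊆ W^l_{N−l}(ℝ), all with norm bounds. -/

import Mathlib

open MeasureTheory Filter

/-- The Japanese bracket `⟨x⟩ = √(1+x²)`. -/
noncomputable def jp (x : ℝ) : ℝ := Real.sqrt (1 + x ^ 2)

/-- `D` is a family of iterated weak derivatives up to order `n`. -/
def HasWeakDerivs (D : ℕ → ℝ → ℝ) (n : ℕ) : Prop :=
  (∀ j, j ≤ n → LocallyIntegrable (D j) volume) ∧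
  ∀ j, j < n → ∀ x : ℝ, D j x = D j 0 + ∫ t in (0:ℝ)..x, D (j + 1) t

/-- Membership in `W^m_N(ℝ) = {f : ⟨x⟩^{N+j} f^{(j)} ∈ L², 0 ≤ j ≤ m}`. -/
def MemWN (m N : ℕ) (D : ℕ → ℝ → ℝ) : Prop :=
  HasWeakDerivs D m ∧ ∀ j, j ≤ m → MemLp (fun x => jp x ^ (N + j) * D j x) 2 volume

/-- The natural norm on `W^m_N`. -/
noncomputable def WNnorm (m N : ℕ) (D : ℕ → ℝ → ℝ) : ENNReal :=
  ∑ j ∈ Finset.range (m + 1), eLpNorm (fun x => jp x ^ (N + j) * D j x) 2 volume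

/-- Membership in `H^m_N(ℝ) = {f : ⟨x⟩^N f^{(j)} ∈ L², 0 ≤ j ≤ m}`. -/
def MemHN (m N : ℕ) (D : ℕ → ℝ → ℝ) : Prop :=
  HasWeakDerivs D m ∧ ∀ j, j ≤ m → MemLp (fun x => jp x ^ N * D j x) 2 volume

/-- The natural norm on `H^m_N`. -/
noncomputable def HNnorm (m N : ℕ) (D : ℕ → ℝ → ℝ) : ENNReal :=
  ∑ j ∈ Finset.range (m + 1), eLpNorm (fun x => jp x ^ N * D j x) 2 volume

/-!
Since `⟨x⟩ ≥ 1`, the weight `⟨x⟩^a` is pointwise dominated by `⟨x⟩^b` whenever `a ≤ b`.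
Each of the three inclusions only lowers the exponent of the weight on every derivative
(`N ≤ N + j`, `0 ≤ N`, and `N - l + j ≤ N` for `j ≤ l`), so all of them hold with constant `1`.
-/

lemma one_le_jp (x : ℝ) : 1 ≤ jp x :=
  Real.one_le_sqrt.mpr (le_add_of_nonneg_right (sq_nonneg x))

lemma continuous_jp : Continuous jp := by
  unfold jp
  fun_prop

lemma norm_jp_pow_mul_le {a b : ℕ} (hab : a ≤ b) (x y : ℝ) :
    ‖jp x ^ a * y‖ ≤ ‖jp x ^ b * y‖ := by
  have hjp : 0 ≤ jp x := zero_le_one.trans (one_le_jp x)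
  rw [norm_mul, norm_mul, Real.norm_of_nonneg (pow_nonneg hjp a),
    Real.norm_of_nonneg (pow_nonneg hjp b)]
  exact mul_le_mul_of_nonneg_right (pow_le_pow_right₀ (one_le_jp x) hab) (norm_nonneg y)

lemma eLpNorm_jp_pow_mul_le {a b : ℕ} (hab : a ≤ b) (g : ℝ → ℝ) (p : ENNReal) (μ : Measure ℝ) :
    eLpNorm (fun x => jp x ^ a * g x) p μ ≤ eLpNorm (fun x => jp x ^ b * g x) p μ :=
  eLpNorm_mono fun x => norm_jp_pow_mul_le hab x (g x)

lemma memLp_jp_pow_mul_of_le {a b : ℕ} (hab : a ≤ b) {g : ℝ → ℝ} {p : ENNReal} {μ : Measure ℝ}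
    (hg : AEStronglyMeasurable g μ) (h : MemLp (fun x => jp x ^ b * g x) p μ) :
    MemLp (fun x => jp x ^ a * g x) p μ :=
  h.of_le ((continuous_jp.pow a).aestronglyMeasurable.mul hg)
    (Eventually.of_forall fun x => norm_jp_pow_mul_le hab x (g x))

lemma HasWeakDerivs.weighted_of_exponent_le {D : ℕ → ℝ → ℝ} {m : ℕ} {e e' : ℕ → ℕ}
    (hD : HasWeakDerivs D m) (he : ∀ j, j ≤ m → e j ≤ e' j)
    (h : ∀ j, j ≤ m → MemLp (fun x => jp x ^ e' j * D j x) 2 volume) :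
    (HasWeakDerivs D m ∧ ∀ j, j ≤ m → MemLp (fun x => jp x ^ e j * D j x) 2 volume) ∧
      ∑ j ∈ Finset.range (m + 1), eLpNorm (fun x => jp x ^ e j * D j x) 2 volume ≤
        ENNReal.ofReal 1 *
          ∑ j ∈ Finset.range (m + 1), eLpNorm (fun x => jp x ^ e' j * D j x) 2 volume := by
  refine ⟨⟨hD, fun j hj =>
    memLp_jp_pow_mul_of_le (he j hj) (hD.1 j hj).aestronglyMeasurable (h j hj)⟩, ?_⟩
  rw [ENNReal.ofReal_one, one_mul]
  exact Finset.sum_le_sum fun j hj =>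
    eLpNorm_jp_pow_mul_le (he j (Nat.lt_succ_iff.mp (Finset.mem_range.mp hj))) (D j) 2 volume

theorem stmt18_general (m N l : ℕ) (hlN : l ≤ N) :
    (∃ C > (0:ℝ), ∀ D : ℕ → ℝ → ℝ, MemWN m N D →
      MemHN m N D ∧ HNnorm m N D ≤ ENNReal.ofReal C * WNnorm m N D) ∧
    (∃ C > (0:ℝ), ∀ D : ℕ → ℝ → ℝ, MemHN m N D →
      MemHN m 0 D ∧ HNnorm m 0 D ≤ ENNReal.ofReal C * HNnorm m N D) ∧
    (∃ C > (0:ℝ), ∀ D : ℕ → ℝ → ℝ, MemHN l N D →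
      MemWN l (N - l) D ∧ WNnorm l (N - l) D ≤ ENNReal.ofReal C * HNnorm l N D) :=
  ⟨⟨1, one_pos, fun _ hD =>
      hD.1.weighted_of_exponent_le (e := fun _ => N) (fun j _ => N.le_add_right j) hD.2⟩,
    ⟨1, one_pos, fun _ hD =>
      hD.1.weighted_of_exponent_le (e := fun _ => 0) (fun _ _ => N.zero_le) hD.2⟩,
    ⟨1, one_pos, fun _ hD =>
      hD.1.weighted_of_exponent_le (e' := fun _ => N) (fun _ hj => by omega) hD.2⟩⟩

/-- The continuous inclusions `W^m_N ⊆ H^m_N ⊆ H^m = H^m_0` and, for `1 ≤ l ≤ N`,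
`H^l_N ⊆ W^l_{N-l}`, with norm bounds. -/
theorem stmt18 (m N l : ℕ) (hm : 1 ≤ m) (hN : 1 ≤ N) (hl : 1 ≤ l) (hlN : l ≤ N) :
    (∃ C > (0:ℝ), ∀ D : ℕ → ℝ → ℝ, MemWN m N D →
      MemHN m N D ∧ HNnorm m N D ≤ ENNReal.ofReal C * WNnorm m N D) ∧
    (∃ C > (0:ℝ), ∀ D : ℕ → ℝ → ℝ, MemHN m N D →
      MemHN m 0 D ∧ HNnorm m 0 D ≤ ENNReal.ofReal C * HNnorm m N D) ∧
    (∃ C > (0:ℝ), ∀ D : ℕ → ℝ → ℝ, MemHN l N D →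
      MemWN l (N - l) D ∧ WNnorm l (N - l) D ≤ ENNReal.ofReal C * HNnorm l N D) :=
  stmt18_general m N l hlN
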